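/- arXiv:1108.0643 — 3 statements merged into one kernel-verified Lean document; each statement's English description precedes it below -/
import Mathlib

section
/- Let G=(V,E) be a finite simple graph, B ⊆ V, β > 0, α := tanh β, and let S ⊆ V∖B be any set of source vertices. Then the sum over all spin configurations σ: V → {−1,+1} with σ ≡ +1 on B of (Π_{v∈S} σ_v) · Π_{{i,j}∈E} exp(β σ_i σ_j) equals (cosh β)^{|E|} · 2^{|V∖B|} · Σ_F α^{|F|}, where the last sum ranges over all edge subsets F ⊆ E such that for every vertex v ∈ V∖B the number of edges of F incident to v is odd if v ∈ S and even if v ∉ S (vertices of B are unconstrained). -/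
open Finset

attribute [local instance] Classical.propDecidable

/-- The real value ±1 of a spin (spins are encoded as units of ℤ). -/
noncomputable def spinR {V : Type*} (σ : V → ℤˣ) (v : V) : ℝ := ((σ v : ℤ) : ℝ)

/-- The Boltzmann factor `exp(β σ_i σ_j)` attached to the edge `{i,j}`. -/
noncomputable def edgeFactor {V : Type*} (β : ℝ) (σ : V → ℤˣ) : Sym2 V → ℝ :=
  Sym2.lift ⟨fun i j => Real.exp (β * (spinR σ i * spinR σ j)),
    fun i j => by simp only []; rw [mul_comm (spinR σ i)]⟩

/-- The number of edges of `F` incident to the vertex `v`. -/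
noncomputable def incCount {V : Type*} (F : Finset (Sym2 V)) (v : V) : ℕ :=
  (F.filter (fun e => v ∈ e)).card

/-- The spin product `σ_i σ_j` attached to the edge `{i,j}`. -/
noncomputable def edgeSpin {V : Type*} (σ : V → ℤˣ) : Sym2 V → ℝ :=
  Sym2.lift ⟨fun i j => spinR σ i * spinR σ j,
    fun i j => by simp only []; rw [mul_comm]⟩

lemma spinR_pm {V : Type*} (σ : V → ℤˣ) (v : V) : spinR σ v = 1 ∨ spinR σ v = -1 := by
  rcases Int.units_eq_one_or (σ v) with h | h <;> simp [spinR, h]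

lemma exp_key (β s : ℝ) (hs : s = 1 ∨ s = -1) :
    Real.exp (β * s) = Real.cosh β * (1 + Real.tanh β * s) := by
  have hc : Real.cosh β ≠ 0 := (Real.cosh_pos β).ne'
  have h1 : Real.cosh β * Real.tanh β = Real.sinh β := by
    rw [Real.tanh_eq_sinh_div_cosh]; field_simp
  rcases hs with h | h <;> subst h
  · rw [mul_one, mul_one, mul_add, mul_one, h1, Real.cosh_add_sinh]
  · rw [mul_neg_one, mul_neg_one, mul_add, mul_one, mul_neg, h1, ← sub_eq_add_neg,
      Real.cosh_sub_sinh]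

lemma edgeFactor_eq {V : Type*} (β : ℝ) (σ : V → ℤˣ) (e : Sym2 V) :
    edgeFactor β σ e = Real.cosh β * (1 + Real.tanh β * edgeSpin σ e) := by
  induction e using Sym2.ind with
  | _ i j =>
    have hs : spinR σ i * spinR σ j = 1 ∨ spinR σ i * spinR σ j = -1 := by
      rcases spinR_pm σ i with h | h <;> rcases spinR_pm σ j with h' | h' <;>
        simp [h, h']
    simp only [edgeFactor, edgeSpin, Sym2.lift_mk]
    exact exp_key β _ hs

lemma edgeSpin_eq {V : Type*} [Fintype V] [DecidableEq V] (σ : V → ℤˣ) (e : Sym2 V)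
    (he : ¬ e.IsDiag) : edgeSpin σ e = ∏ v ∈ univ.filter (fun v => v ∈ e), spinR σ v := by
  induction e using Sym2.ind with
  | _ i j =>
    have hij : i ≠ j := by simpa [Sym2.mk_isDiag_iff] using he
    have : univ.filter (fun v => v ∈ s(i, j)) = {i, j} := by
      ext v; simp [Sym2.mem_iff]
    rw [this, Finset.prod_pair hij]
    simp [edgeSpin]

lemma prod_ite_mem_pow {V : Type*} (F : Finset (Sym2 V)) (v : V)
    [DecidablePred (fun e : Sym2 V => v ∈ e)] (c : ℝ) :
    ∏ e ∈ F, (if v ∈ e then c else 1) = c ^ incCount F v := by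
  rw [incCount, Finset.prod_ite, Finset.prod_const, Finset.prod_const_one, mul_one]
  congr!

lemma units_univ : (univ : Finset ℤˣ) = {1, -1} := by
  ext u; rcases Int.units_eq_one_or u with h | h <;> simp [h]

lemma sum_units_pow (n : ℕ) :
    ∑ u : ℤˣ, ((u : ℤ) : ℝ) ^ n = 1 + (-1 : ℝ) ^ n := by
  rw [units_univ, Finset.sum_pair (by decide : (1 : ℤˣ) ≠ -1)]
  norm_num

/-- High-temperature expansion. For a finite simple graph `(V,E)`, boundary
set `B ⊆ V`, `β > 0`, `α = tanh β`, and sources `S ⊆ V∖B`: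
`Σ_{σ : σ≡+1 on B} (Π_{v∈S} σ_v) Π_{{i,j}∈E} exp(β σ_i σ_j)
  = (cosh β)^{|E|} · 2^{|V∖B|} · Σ_F α^{|F|}`,
where `F` ranges over edge subsets whose degree at each `v ∉ B` is odd iff `v ∈ S`. -/
theorem stmt1 {V : Type*} [Fintype V] [DecidableEq V]
    (E : Finset (Sym2 V)) (hE : ∀ e ∈ E, ¬ e.IsDiag)
    (B : Finset V) (β : ℝ) (hβ : 0 < β) (S : Finset V) (hS : ∀ v ∈ S, v ∉ B) :
    ∑ σ ∈ Finset.univ.filter (fun σ : V → ℤˣ => ∀ v ∈ B, σ v = 1),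
        (∏ v ∈ S, spinR σ v) * ∏ e ∈ E, edgeFactor β σ e
      = Real.cosh β ^ E.card * 2 ^ (Finset.univ \ B).card *
          ∑ F ∈ E.powerset.filter (fun F => ∀ v : V, v ∉ B →
              (if v ∈ S then Odd (incCount F v) else Even (incCount F v))),
            Real.tanh β ^ F.card := by
  classical
  set Ω := Finset.univ.filter (fun σ : V → ℤˣ => ∀ v ∈ B, σ v = 1) with hΩ
  set k := (Finset.univ \ B).card with hk
  set P : Finset (Sym2 V) → Prop := fun F => ∀ v : V, v ∉ B →
      (if v ∈ S then Odd (incCount F v) else Even (incCount F v)) with hP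
  -- Step 1: expand the product of edge factors
  have expand : ∀ σ : V → ℤˣ,
      ∏ e ∈ E, edgeFactor β σ e
        = Real.cosh β ^ E.card *
            ∑ F ∈ E.powerset, Real.tanh β ^ F.card * ∏ e ∈ F, edgeSpin σ e := by
    intro σ
    calc ∏ e ∈ E, edgeFactor β σ e
        = ∏ e ∈ E, (Real.cosh β * (Real.tanh β * edgeSpin σ e + 1)) := by
          refine Finset.prod_congr rfl fun e _ => ?_
          rw [edgeFactor_eq]; ring
      _ = Real.cosh β ^ E.card * ∏ e ∈ E, (Real.tanh β * edgeSpin σ e + 1) := by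
          rw [Finset.prod_mul_distrib, Finset.prod_const]
      _ = _ := by
          rw [Finset.prod_add]
          congr 1
          refine Finset.sum_congr rfl fun F _ => ?_
          rw [Finset.prod_const_one, mul_one, Finset.prod_mul_distrib, Finset.prod_const]
  -- Step 2: spin sum for a fixed edge subset F
  have spin_sum : ∀ F ∈ E.powerset,
      (∑ σ ∈ Ω, (∏ v ∈ S, spinR σ v) * ∏ e ∈ F, edgeSpin σ e)
        = if P F then (2 : ℝ) ^ k else 0 := by
    intro F hF
    rw [Finset.mem_powerset] at hF
    set m : V → ℕ := fun v => incCount F v + (if v ∈ S then 1 else 0) with hm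
    set t : V → Finset ℤˣ := fun v => if v ∈ B then ({1} : Finset ℤˣ) else univ with ht
    have point : ∀ σ : V → ℤˣ,
        (∏ v ∈ S, spinR σ v) * ∏ e ∈ F, edgeSpin σ e = ∏ v, spinR σ v ^ m v := by
      intro σ
      have h1 : (∏ v ∈ S, spinR σ v)
          = ∏ v, (if v ∈ S then spinR σ v else 1) := by
        rw [Finset.prod_ite_mem, Finset.univ_inter]
      have h2 : (∏ e ∈ F, edgeSpin σ e) = ∏ v, spinR σ v ^ incCount F v := by
        calc ∏ e ∈ F, edgeSpin σ e
            = ∏ e ∈ F, ∏ v ∈ univ.filter (fun v => v ∈ e), spinR σ v :=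
              Finset.prod_congr rfl fun e he => edgeSpin_eq σ e (hE e (hF he))
          _ = ∏ e ∈ F, ∏ v : V, (if v ∈ e then spinR σ v else 1) :=
              Finset.prod_congr rfl fun e _ => Finset.prod_filter _ _
          _ = ∏ v : V, ∏ e ∈ F, (if v ∈ e then spinR σ v else 1) := Finset.prod_comm
          _ = ∏ v : V, spinR σ v ^ incCount F v :=
              Finset.prod_congr rfl fun v _ => prod_ite_mem_pow F v _
      rw [h1, h2, ← Finset.prod_mul_distrib]
      refine Finset.prod_congr rfl fun v _ => ?_
      show (if v ∈ S then spinR σ v else 1) * spinR σ v ^ incCount F v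
          = spinR σ v ^ (incCount F v + if v ∈ S then 1 else 0)
      rw [pow_add]
      by_cases hv : v ∈ S <;> simp [hv, mul_comm]
    have hΩt : Ω = Fintype.piFinset t := by
      ext σ
      simp only [hΩ, mem_filter, mem_univ, true_and, Fintype.mem_piFinset, ht]
      constructor
      · intro h v
        by_cases hv : v ∈ B
        · simp [hv, h]
        · simp only [hv, ite_false]; exact mem_univ _
      · intro h v hv; have := h v; simpa [hv] using this
    have key : ∑ σ ∈ Fintype.piFinset t, ∏ v, spinR σ v ^ m v
        = ∏ v, ∑ u ∈ t v, ((u : ℤ) : ℝ) ^ m v := by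
      rw [Finset.prod_univ_sum]; rfl
    have eval : ∀ v : V, (∑ u ∈ t v, ((u : ℤ) : ℝ) ^ m v)
        = if v ∈ B then 1 else (1 + (-1 : ℝ) ^ m v) := by
      intro v
      by_cases hv : v ∈ B
      · simp [ht, hv]
      · simp only [ht, hv, ite_false]
        exact sum_units_pow (m v)
    calc ∑ σ ∈ Ω, (∏ v ∈ S, spinR σ v) * ∏ e ∈ F, edgeSpin σ e
        = ∑ σ ∈ Fintype.piFinset t, ∏ v, spinR σ v ^ m v := by
          rw [← hΩt]; exact Finset.sum_congr rfl fun σ _ => point σ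
      _ = ∏ v, (if v ∈ B then (1 : ℝ) else (1 + (-1 : ℝ) ^ m v)) := by
          rw [key]; exact Finset.prod_congr rfl fun v _ => eval v
      _ = ∏ v ∈ univ \ B, (1 + (-1 : ℝ) ^ m v) := by
          rw [Finset.prod_ite, Finset.prod_const_one, one_mul, Finset.sdiff_eq_filter]
      _ = if P F then (2 : ℝ) ^ k else 0 := by
          by_cases hPF : P F
          · rw [if_pos hPF]
            have h2 : ∀ v ∈ univ \ B, (1 + (-1 : ℝ) ^ m v) = 2 := by
              intro v hv
              have hv' : v ∉ B := (Finset.mem_sdiff.mp hv).2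
              have heven : Even (m v) := by
                have hcond := hPF v hv'
                by_cases hvS : v ∈ S
                · rw [if_pos hvS] at hcond
                  simp only [hm, hvS, if_pos]
                  rw [Nat.even_add_one, Nat.not_even_iff_odd]
                  exact hcond
                · rw [if_neg hvS] at hcond
                  simpa [hm, hvS] using hcond
              rw [heven.neg_one_pow]; norm_num
            rw [Finset.prod_congr rfl h2, Finset.prod_const, hk]
          · rw [if_neg hPF]
            simp only [hP, not_forall] at hPF
            obtain ⟨v, hvB, hcond⟩ := hPF
            refine Finset.prod_eq_zero (Finset.mem_sdiff.mpr ⟨mem_univ v, hvB⟩) ?_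
            have hodd : Odd (m v) := by
              by_cases hvS : v ∈ S
              · rw [if_pos hvS] at hcond
                simp only [hm, hvS, if_pos]
                rwa [Nat.odd_add_one]
              · rw [if_neg hvS] at hcond
                rw [Nat.not_even_iff_odd] at hcond
                simpa [hm, hvS] using hcond
            rw [hodd.neg_one_pow]; ring
  -- Step 3: assemble
  calc ∑ σ ∈ Ω, (∏ v ∈ S, spinR σ v) * ∏ e ∈ E, edgeFactor β σ e
      = ∑ σ ∈ Ω, ∑ F ∈ E.powerset,
          (Real.cosh β ^ E.card * Real.tanh β ^ F.card) *
            ((∏ v ∈ S, spinR σ v) * ∏ e ∈ F, edgeSpin σ e) := by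
        refine Finset.sum_congr rfl fun σ _ => ?_
        rw [expand σ, Finset.mul_sum, Finset.mul_sum]
        exact Finset.sum_congr rfl fun F _ => by ring
    _ = ∑ F ∈ E.powerset,
          (Real.cosh β ^ E.card * Real.tanh β ^ F.card) *
            ∑ σ ∈ Ω, (∏ v ∈ S, spinR σ v) * ∏ e ∈ F, edgeSpin σ e := by
        rw [Finset.sum_comm]
        exact Finset.sum_congr rfl fun F _ => (Finset.mul_sum _ _ _).symm
    _ = ∑ F ∈ E.powerset,
          (Real.cosh β ^ E.card * Real.tanh β ^ F.card) *
            (if P F then (2 : ℝ) ^ k else 0) := by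
        exact Finset.sum_congr rfl fun F hF => by rw [spin_sum F hF]
    _ = Real.cosh β ^ E.card * 2 ^ k *
          ∑ F ∈ E.powerset.filter P, Real.tanh β ^ F.card := by
        rw [Finset.sum_filter, Finset.mul_sum]
        refine Finset.sum_congr rfl fun F _ => ?_
        by_cases hPF : P F
        · rw [if_pos hPF, if_pos hPF]; ring
        · rw [if_neg hPF, if_neg hPF]; ring
end

section
/- Define F(x,y,v) := √y · coth((x−v)/2) for x, v ∈ ℝ with x ≠ v and y > 0. Then at every such point, coth((x−v)/2) · ∂F/∂x − (y/(2·sinh²((x−v)/2))) · ∂F/∂y + (3/2) · ∂²F/∂v² = 0. -/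
/-!
A direct computation. Writing `s = sinh ((x - v) / 2)` and `c = cosh ((x - v) / 2)`, the partial
derivatives are `∂ₓF = -√y / (2 s²)`, `∂_y F = c / (2 s √y)` and `∂²_v F = √y c / (2 s³)`, so the
three terms of the operator are `-√y c / (2 s³)`, `-√y c / (4 s³)` and `3 √y c / (4 s³)`.
-/

noncomputable def coth (x : ℝ) : ℝ := Real.cosh x / Real.sinh x

noncomputable def stripObs (x y v : ℝ) : ℝ := Real.sqrt y * coth ((x - v) / 2)

open Real Filter Topology

lemma sinh_half_sub_ne_zero {a b : ℝ} (h : a ≠ b) : sinh ((a - b) / 2) ≠ 0 := by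
  rw [ne_eq, sinh_eq_zero]
  intro hab
  exact h (by linarith)

lemma hasDerivAt_coth {u : ℝ} (hu : sinh u ≠ 0) : HasDerivAt coth (-1 / sinh u ^ 2) u := by
  refine ((hasDerivAt_cosh u).div (hasDerivAt_sinh u) hu).congr_deriv ?_
  rw [← cosh_sq_sub_sinh_sq u]
  ring

lemma hasDerivAt_stripObs_fst (y : ℝ) {x v : ℝ} (h : x ≠ v) :
    HasDerivAt (fun t => stripObs t y v) (-√y / (2 * sinh ((x - v) / 2) ^ 2)) x := by
  have hinner : HasDerivAt (fun t => (t - v) / 2) (1 / 2) x :=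
    ((hasDerivAt_id x).sub_const v).div_const 2
  refine (((hasDerivAt_coth (sinh_half_sub_ne_zero h)).comp x hinner).const_mul √y).congr_deriv ?_
  ring

lemma hasDerivAt_stripObs_snd (x v : ℝ) {y : ℝ} (hy : y ≠ 0) :
    HasDerivAt (fun t => stripObs x t v) (coth ((x - v) / 2) / (2 * √y)) y := by
  refine ((hasDerivAt_sqrt hy).mul_const (coth ((x - v) / 2))).congr_deriv ?_
  ring

lemma hasDerivAt_stripObs_thd (y : ℝ) {x v : ℝ} (h : x ≠ v) :
    HasDerivAt (fun t => stripObs x y t) (√y / (2 * sinh ((x - v) / 2) ^ 2)) v := by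
  have hinner : HasDerivAt (fun t => (x - t) / 2) (-1 / 2) v := by
    simpa using ((hasDerivAt_id v).const_sub x).div_const 2
  refine (((hasDerivAt_coth (sinh_half_sub_ne_zero h)).comp v hinner).const_mul √y).congr_deriv ?_
  ring

lemma hasDerivAt_deriv_stripObs_thd (y : ℝ) {x v : ℝ} (h : x ≠ v) :
    HasDerivAt (deriv fun t => stripObs x y t)
      (√y * cosh ((x - v) / 2) / (2 * sinh ((x - v) / 2) ^ 3)) v := by
  have hderiv : (fun w => √y / (2 * sinh ((x - w) / 2) ^ 2)) =ᶠ[𝓝 v]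
      deriv fun t => stripObs x y t := by
    filter_upwards [isOpen_ne.mem_nhds h.symm] with w hw
    exact ((hasDerivAt_stripObs_thd y hw.symm).deriv).symm
  have hinner : HasDerivAt (fun t => (x - t) / 2) (-1 / 2) v := by
    simpa using ((hasDerivAt_id v).const_sub x).div_const 2
  have hdenom : HasDerivAt (fun w => 2 * sinh ((x - w) / 2) ^ 2)
      (2 * (2 * sinh ((x - v) / 2) * (cosh ((x - v) / 2) * (-1 / 2)))) v := by
    simpa using (((hasDerivAt_sinh _).comp v hinner).pow 2).const_mul 2
  have hs := sinh_half_sub_ne_zero h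
  refine (((hasDerivAt_const v √y).div hdenom (by positivity)).congr_of_eventuallyEq
    hderiv.symm).congr_deriv ?_
  field_simp
  ring

/-- For `F(x,y,v) := √y · coth((x−v)/2)`, at every point with `x ≠ v`, `y > 0`,
`coth((x−v)/2) · ∂F/∂x − (y/(2·sinh²((x−v)/2))) · ∂F/∂y + (3/2) · ∂²F/∂v² = 0`. -/
theorem stmt6 (x y v : ℝ) (hxv : x ≠ v) (hy : 0 < y) :
    coth ((x - v) / 2) * deriv (fun t => stripObs t y v) x
      - (y / (2 * (Real.sinh ((x - v) / 2)) ^ 2)) * deriv (fun t => stripObs x t v) y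
      + (3 / 2) * deriv (deriv (fun t => stripObs x y t)) v = 0 := by
  rw [(hasDerivAt_stripObs_fst y hxv).deriv, (hasDerivAt_stripObs_snd x v hy.ne').deriv,
    (hasDerivAt_deriv_stripObs_thd y hxv).deriv, coth]
  have hs := sinh_half_sub_ne_zero hxv
  have hsqrt : √y ≠ 0 := (sqrt_pos.mpr hy).ne'
  field_simp
  rw [sq_sqrt hy.le]
  ring
end

section
/- For every real z with |z| < 1: ₂F₁(−1/2, 3/4; −1/4; z) = (1+z)·(1−z)^{−1/2}; that is, Σ_{n=0}^∞ ((−1/2)_n · (3/4)_n / ((−1/4)_n · n!)) · z^n = (1+z)/√(1−z). (Note that (−1/4)_n ≠ 0 for every n ≥ 0 since −1/4 is not a nonpositive integer.) -/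
/-!
The coefficients of `₂F₁(2b, b+1; b; z)` telescope: since `(b+1)_n / (b)_n = (b+n)/b`, the `n`-th
one equals `c n + c (n-1)`, where `c n = (2b+1)_n / n!` are the coefficients of the binomial
series of `(1 - z)^{-(2b+1)}`. Hence `₂F₁(2b, b+1; b; z) = (1 + z) (1 - z)^{-(2b+1)}`, and
`b = -1/4` gives the claim.
-/

/-- The Gauss hypergeometric series `₂F₁(a,b;c;z) = Σ_n (a)_n (b)_n / ((c)_n n!) · zⁿ`,
where `(a)_n` is the rising factorial (Pochhammer symbol). -/
noncomputable def hyp2F1 (a b c z : ℝ) : ℝ :=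
  ∑' n : ℕ, ((ascPochhammer ℝ n).eval a * (ascPochhammer ℝ n).eval b /
      ((ascPochhammer ℝ n).eval c * (n.factorial : ℝ))) * z ^ n

open Polynomial

lemma ascPochhammer_succ_eval_left {S : Type*} [CommSemiring S] (n : ℕ) (x : S) :
    (ascPochhammer S (n + 1)).eval x = x * (ascPochhammer S n).eval (x + 1) := by
  rw [ascPochhammer_succ_left, eval_mul, eval_X, eval_comp, eval_add, eval_X, eval_one]

lemma Ring.choose_add_natCast_sub_one_eq_ascPochhammer_div {K : Type*} [Field K] [CharZero K]
    (a : K) (n : ℕ) :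
    Ring.choose (a + n - 1) n = (ascPochhammer K n).eval a / n.factorial := by
  rw [← Ring.multichoose_eq, eq_div_iff (Nat.cast_ne_zero.mpr n.factorial_ne_zero), mul_comm,
    ← nsmul_eq_mul, Ring.factorial_nsmul_multichoose_eq_ascPochhammer,
    ascPochhammer_smeval_eq_eval]

theorem Real.hasSum_ascPochhammer_div_factorial_mul_pow (a : ℝ) {z : ℝ} (hz : |z| < 1) :
    HasSum (fun n ↦ (ascPochhammer ℝ n).eval a / n.factorial * z ^ n) (1 / (1 - z) ^ a) := by
  have := (Real.one_div_one_sub_rpow_hasFPowerSeriesOnBall_zero a).hasSum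
    (y := z) (by simpa [enorm_eq_nnnorm, ← NNReal.coe_lt_one] using hz)
  simpa [FormalMultilinearSeries.ofScalars_apply_eq, mul_comm,
    Ring.choose_add_natCast_sub_one_eq_ascPochhammer_div] using this

lemma ascPochhammer_eval_ne_zero {R : Type*} [CommRing R] [IsDomain R] {b : R}
    (hb : ∀ k : ℕ, b ≠ -k) (n : ℕ) : (ascPochhammer R n).eval b ≠ 0 := fun h ↦ by
  obtain ⟨k, -, hk⟩ := (ascPochhammer_eval_eq_zero_iff n b).mp h
  exact hb k (by rw [hk, neg_neg])

lemma hyp2F1_two_mul_coeff_succ {b : ℝ} (hb : ∀ n, (ascPochhammer ℝ n).eval b ≠ 0)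
    (n : ℕ) :
    (ascPochhammer ℝ (n + 1)).eval (2 * b) * (ascPochhammer ℝ (n + 1)).eval (b + 1) /
        ((ascPochhammer ℝ (n + 1)).eval b * (n + 1).factorial) =
      (ascPochhammer ℝ (n + 1)).eval (2 * b + 1) / (n + 1).factorial +
        (ascPochhammer ℝ n).eval (2 * b + 1) / n.factorial := by
  obtain ⟨hb₀, hb₁⟩ := mul_ne_zero_iff.mp (ascPochhammer_succ_eval_left n b ▸ hb (n + 1))
  rw [ascPochhammer_succ_eval_left n (2 * b), ascPochhammer_succ_eval_left n b,
    ascPochhammer_succ_eval n (b + 1), ascPochhammer_succ_eval n (2 * b + 1), Nat.factorial_succ,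
    Nat.cast_mul]
  have hfact := n.factorial_ne_zero
  field_simp
  push_cast
  ring

theorem hyp2F1_two_mul_add_one_self {b : ℝ} (hb : ∀ k : ℕ, b ≠ -k) {z : ℝ} (hz : |z| < 1) :
    hyp2F1 (2 * b) (b + 1) b z = (1 + z) / (1 - z) ^ (2 * b + 1) := by
  set t : ℕ → ℝ := fun n ↦ (ascPochhammer ℝ n).eval (2 * b) * (ascPochhammer ℝ n).eval (b + 1) /
      ((ascPochhammer ℝ n).eval b * n.factorial) * z ^ n
  set c : ℕ → ℝ := fun n ↦ (ascPochhammer ℝ n).eval (2 * b + 1) / n.factorial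
  set S := 1 / (1 - z) ^ (2 * b + 1)
  have hS : HasSum (fun n ↦ c n * z ^ n) S := Real.hasSum_ascPochhammer_div_factorial_mul_pow _ hz
  have ht : ∀ n, t (n + 1) = c (n + 1) * z ^ (n + 1) + z * (c n * z ^ n) := fun n ↦ by
    simp only [t, c, hyp2F1_two_mul_coeff_succ (ascPochhammer_eval_ne_zero hb)]
    ring
  have hshift : HasSum (fun n ↦ t (n + 1)) (S - 1 + z * S) := by
    simp only [ht]
    refine HasSum.add ?_ (hS.mul_left z)
    simpa [c] using (hasSum_nat_add_iff' 1).mpr hS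
  rw [hyp2F1, ((hasSum_nat_add_iff 1).mp hshift).tsum_eq]
  simp only [t, Finset.sum_range_one, ascPochhammer_zero, eval_one, Nat.factorial_zero,
    Nat.cast_one, pow_zero]
  ring

/-- For every real `z` with `|z| < 1`,
`₂F₁(−1/2, 3/4; −1/4; z) = (1+z)·(1−z)^{−1/2}`. -/
theorem stmt13 (z : ℝ) (hz : |z| < 1) :
    hyp2F1 (-(1/2)) (3/4) (-(1/4)) z = (1 + z) / Real.sqrt (1 - z) := by
  have hb : ∀ k : ℕ, -(1 / 4 : ℝ) ≠ -k := fun k h ↦ by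
    have : (4 * k : ℝ) = 1 := by linarith
    norm_cast at this
    omega
  have h := hyp2F1_two_mul_add_one_self hb hz
  norm_num at h
  rw [h, Real.sqrt_eq_rpow]
end
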